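/- If A = [[Φ + ηI, P],[Pᵀ, 0]] where Φ is symmetric positive semidefinite on the kernel of Pᵀ (i.e., λᵀΦλ ≥ 0 whenever Pᵀλ = 0), η > 0, and P has full column rank, then for any B = [[P̂ᵀ],[Φ̂]] appended, the trailing Schur complement (Ĉ + ηI) − BᵀA⁻¹B of the regularized extended kernel system is positive definite, where the extended matrix is the kernel matrix of the regularized kernel φ̃(x_i,x_j) = φ(x_i,x_j) + η δ_ij on the enlarged point set. -/

import Mathlib

/-!
Write `A⁻¹ B c = (λ, μ)`. The two block rows of `A (λ, μ) = B c` say that `w = (-λ, c)` satisfies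
the extended polynomial constraint `P̃ᵀ w = 0`, and that `cᵀ (Ĉ + ηI - Bᵀ A⁻¹ B) c` is exactly the
quadratic form of the regularized full kernel block at `w`. That form is `wᵀ Φ_full w + η |w|²`,
positive because `c ≠ 0`. The same computation with `c = 0`, together with the injectivity of `P`,
shows that the saddle-point matrix `A` is invertible.
-/

open Matrix

namespace Matrix

theorem mulVec_injective_of_rank_eq_card {m n K : Type*} [Fintype n] [Field K]
    (A : Matrix m n K) (h : A.rank = Fintype.card n) : Function.Injective A.mulVec := by
  have hker : Module.finrank K (LinearMap.ker A.mulVecLin) = 0 := by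
    have := LinearMap.finrank_range_add_finrank_ker A.mulVecLin
    rw [Module.finrank_fintype_fun_eq_card] at this
    unfold rank at h
    omega
  exact LinearMap.ker_eq_bot.mp (Submodule.finrank_eq_zero.mp hker)

theorem dotProduct_mulVec_add_smul_one_pos {n R : Type*} [Fintype n] [DecidableEq n] [CommRing R]
    [LinearOrder R] [IsStrictOrderedRing R] {K : Matrix n n R} {η : R} (hη : 0 < η)
    {w : n → R} (hw : w ≠ 0) (hK : 0 ≤ w ⬝ᵥ K *ᵥ w) : 0 < w ⬝ᵥ (K + η • 1) *ᵥ w := by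
  have hww : 0 < w ⬝ᵥ w := lt_of_le_of_ne (Finset.sum_nonneg fun i _ => mul_self_nonneg (w i))
    (fun h => hw (dotProduct_self_eq_zero.mp h.symm))
  rw [add_mulVec, smul_mulVec, one_mulVec, dotProduct_add, dotProduct_smul, smul_eq_mul]
  positivity

section Saddle

variable {R ι κ ν : Type*} [Fintype ι] [Fintype κ] [Fintype ν]

theorem fromBlocks_mulVec_injective_of_pos_on_ker [Field R] [PartialOrder R]
    {H : Matrix ι ι R} {P : Matrix ι ν R} (hP : Function.Injective P.mulVec)
    (hH : ∀ v, v ≠ 0 → Pᵀ *ᵥ v = 0 → 0 < v ⬝ᵥ H *ᵥ v) :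
    Function.Injective (fromBlocks H P Pᵀ 0).mulVec := by
  suffices hker : ∀ y, fromBlocks H P Pᵀ 0 *ᵥ y = 0 → y = 0 from
    fun x y hxy => sub_eq_zero.mp (hker _ (by rw [mulVec_sub, hxy, sub_self]))
  intro y hy
  obtain ⟨v, w, rfl⟩ : ∃ v w, y = Sum.elim v w := ⟨_, _, (Sum.elim_comp_inl_inr y).symm⟩
  rw [fromBlocks_mulVec, Sum.elim_comp_inl, Sum.elim_comp_inr, zero_mulVec, add_zero] at hy
  have h₁ : H *ᵥ v + P *ᵥ w = 0 := funext fun i => congrFun hy (.inl i)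
  have h₂ : Pᵀ *ᵥ v = 0 := funext fun i => congrFun hy (.inr i)
  have hv : v = 0 := by
    by_contra hv
    have hPw : v ⬝ᵥ P *ᵥ w = 0 := by
      rw [dotProduct_mulVec, ← mulVec_transpose, h₂, zero_dotProduct]
    have hHv : v ⬝ᵥ H *ᵥ v = 0 := by
      rw [eq_neg_of_add_eq_zero_left h₁, dotProduct_neg, hPw, neg_zero]
    exact (hH v hv h₂).ne' hHv
  have hw : w = 0 := hP (by rwa [hv, mulVec_zero, zero_add, ← mulVec_zero P] at h₁)
  rw [hv, hw, Sum.elim_zero_zero]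

theorem dotProduct_fromBlocks_mulVec_eq_of_saddle [CommRing R]
    {K₁₁ : Matrix ι ι R} {K₁₂ : Matrix ι κ R} {K₂₂ : Matrix κ κ R}
    {P : Matrix ι ν R} {Q : Matrix κ ν R} {lam : ι → R} {μ : ν → R} {c : κ → R}
    (h₁ : K₁₁ *ᵥ lam + P *ᵥ μ = K₁₂ *ᵥ c) (h₂ : Pᵀ *ᵥ lam = Qᵀ *ᵥ c) :
    Sum.elim (-lam) c ⬝ᵥ fromBlocks K₁₁ K₁₂ K₁₂ᵀ K₂₂ *ᵥ Sum.elim (-lam) c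
      = c ⬝ᵥ K₂₂ *ᵥ c - (fromRows K₁₂ Qᵀ *ᵥ c) ⬝ᵥ Sum.elim lam μ := by
  have hμ : (Qᵀ *ᵥ c) ⬝ᵥ μ = lam ⬝ᵥ K₁₂ *ᵥ c - lam ⬝ᵥ K₁₁ *ᵥ lam := by
    rw [← h₂, mulVec_transpose, ← dotProduct_mulVec, ← h₁, dotProduct_add]
    ring
  have hK₁₂ : c ⬝ᵥ K₁₂ᵀ *ᵥ lam = (K₁₂ *ᵥ c) ⬝ᵥ lam := by
    rw [dotProduct_mulVec, vecMul_transpose]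
  rw [fromBlocks_mulVec, Sum.elim_comp_inl, Sum.elim_comp_inr, fromRows_mulVec,
    sumElim_dotProduct_sumElim, sumElim_dotProduct_sumElim, hμ]
  simp only [mulVec_neg, neg_dotProduct, dotProduct_neg, dotProduct_add, hK₁₂,
    dotProduct_comm lam (K₁₂ *ᵥ c)]
  ring

theorem posDef_saddle_schur_complement [Field R] [PartialOrder R] [StarRing R] [TrivialStar R]
    [DecidableEq ι] [DecidableEq ν]
    {K₁₁ : Matrix ι ι R} {K₁₂ : Matrix ι κ R} {K₂₂ : Matrix κ κ R}
    {P : Matrix ι ν R} {Q : Matrix κ ν R} (h₁₁ : K₁₁.IsSymm) (h₂₂ : K₂₂.IsSymm)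
    (hP : Function.Injective P.mulVec)
    (hK : ∀ w, w ≠ 0 → (fromRows P Q)ᵀ *ᵥ w = 0 →
      0 < w ⬝ᵥ fromBlocks K₁₁ K₁₂ K₁₂ᵀ K₂₂ *ᵥ w) :
    (K₂₂ - (fromRows K₁₂ Qᵀ)ᵀ * (fromBlocks K₁₁ P Pᵀ 0)⁻¹ * fromRows K₁₂ Qᵀ).PosDef := by
  set A := fromBlocks K₁₁ P Pᵀ 0 with hAdef
  set B := fromRows K₁₂ Qᵀ with hBdef
  have hK₁₁ : ∀ v, v ≠ 0 → Pᵀ *ᵥ v = 0 → 0 < v ⬝ᵥ K₁₁ *ᵥ v := fun v hv hPv => by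
    simpa [fromBlocks_mulVec] using
      hK (Sum.elim v 0) (fun h => hv (funext fun i => congrFun h (.inl i)))
        (by rw [transpose_fromRows, fromCols_mulVec_sumElim, hPv, mulVec_zero, add_zero])
  have hA : IsUnit A.det := (isUnit_iff_isUnit_det A).mp <|
    mulVec_injective_iff_isUnit.mp (fromBlocks_mulVec_injective_of_pos_on_ker hP hK₁₁)
  have hAherm : A.IsHermitian :=
    .fromBlocks (isHermitian_iff_isSymm.mpr h₁₁) (conjTranspose_eq_transpose_of_trivial P)
      (isHermitian_iff_isSymm.mpr (by simp))
  refine posDef_iff_dotProduct_mulVec.mpr ⟨?_, fun c hc => ?_⟩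
  · rw [← conjTranspose_eq_transpose_of_trivial]
    exact (isHermitian_iff_isSymm.mpr h₂₂).sub (isHermitian_conjTranspose_mul_mul B hAherm.inv)
  obtain ⟨lam, μ, hy⟩ : ∃ lam μ, Sum.elim lam μ = A⁻¹ *ᵥ B *ᵥ c :=
    ⟨_, _, Sum.elim_comp_inl_inr _⟩
  have hschur : c ⬝ᵥ (Bᵀ * A⁻¹ * B) *ᵥ c = (B *ᵥ c) ⬝ᵥ Sum.elim lam μ := by
    rw [hy, Matrix.mul_assoc, ← mulVec_mulVec, ← mulVec_mulVec, dotProduct_mulVec,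
      vecMul_transpose]
  have hAy : A *ᵥ Sum.elim lam μ = B *ᵥ c := by
    rw [hy, mulVec_mulVec, mul_nonsing_inv _ hA, one_mulVec]
  rw [hAdef, hBdef, fromBlocks_mulVec, fromRows_mulVec, Sum.elim_comp_inl, Sum.elim_comp_inr,
    zero_mulVec, add_zero] at hAy
  have h₁ : K₁₁ *ᵥ lam + P *ᵥ μ = K₁₂ *ᵥ c := funext fun i => congrFun hAy (.inl i)
  have h₂ : Pᵀ *ᵥ lam = Qᵀ *ᵥ c := funext fun i => congrFun hAy (.inr i)
  calc 0 < Sum.elim (-lam) c ⬝ᵥ fromBlocks K₁₁ K₁₂ K₁₂ᵀ K₂₂ *ᵥ Sum.elim (-lam) c := by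
        refine hK _ (fun h => hc (funext fun i => congrFun h (.inr i))) ?_
        rw [transpose_fromRows, fromCols_mulVec_sumElim, mulVec_neg, h₂, neg_add_cancel]
    _ = star c ⬝ᵥ (K₂₂ - Bᵀ * A⁻¹ * B) *ᵥ c := by
        rw [dotProduct_fromBlocks_mulVec_eq_of_saddle h₁ h₂, star_trivial, sub_mulVec,
          dotProduct_sub, hschur]

end Saddle

end Matrix

/-- for the regularized RBF system, the trailing Schur complement
of the extended kernel system is positive definite.  Here `Φ` is the kernel
matrix on the old points, `Φhat` the cross-kernel block, `φhat` the kernel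
matrix on the `k` new points, `P` and `Phat` the polynomial blocks, and the
unregularized full kernel block is positive semidefinite on the null space of
the extended polynomial matrix. -/
theorem regularized_schur_complement_posdef
    (n m k : ℕ) (η : ℝ) (hη : 0 < η)
    (Φ : Matrix (Fin n) (Fin n) ℝ)
    (Φhat : Matrix (Fin n) (Fin k) ℝ)
    (φhat : Matrix (Fin k) (Fin k) ℝ)
    (P : Matrix (Fin n) (Fin m) ℝ)
    (Phat : Matrix (Fin k) (Fin m) ℝ)
    (hΦsymm : Φ.IsSymm) (hφhatsymm : φhat.IsSymm)
    (hrank : P.rank = m)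
    -- conditional positive semidefiniteness of the full kernel block on the
    -- null space of the extended polynomial constraint matrix
    (Pfull : Matrix (Fin n ⊕ Fin k) (Fin m) ℝ)
    (hPfull : Pfull = Matrix.of (Sum.elim (fun i => P i) (fun i => Phat i)))
    (hPSD : ∀ lam : (Fin n ⊕ Fin k) → ℝ,
      Pfullᵀ.mulVec lam = 0 →
      0 ≤ lam ⬝ᵥ (Matrix.fromBlocks Φ Φhat Φhatᵀ φhat).mulVec lam)
    (A : Matrix (Fin n ⊕ Fin m) (Fin n ⊕ Fin m) ℝ)
    (hA : A = Matrix.fromBlocks (Φ + η • (1 : Matrix (Fin n) (Fin n) ℝ)) P Pᵀ 0)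
    (B : Matrix (Fin n ⊕ Fin m) (Fin k) ℝ)
    (hB : B = Matrix.of (Sum.elim (fun i j => Φhat i j) (fun i j => Phat j i))) :
    (φhat + η • (1 : Matrix (Fin k) (Fin k) ℝ) - Bᵀ * A⁻¹ * B).PosDef := by
  obtain rfl : Pfull = fromRows P Phat := hPfull
  obtain rfl : B = fromRows Φhat Phatᵀ := hB
  subst hA
  have hregularized : fromBlocks (Φ + η • 1) Φhat Φhatᵀ (φhat + η • 1)
      = fromBlocks Φ Φhat Φhatᵀ φhat + η • (1 : Matrix (Fin n ⊕ Fin k) (Fin n ⊕ Fin k) ℝ) := by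
    rw [← fromBlocks_one, fromBlocks_smul, fromBlocks_add]
    simp
  refine posDef_saddle_schur_complement (hΦsymm.add (isSymm_one.smul η))
    (hφhatsymm.add (isSymm_one.smul η))
    (mulVec_injective_of_rank_eq_card P (by rw [hrank, Fintype.card_fin])) fun w hw hPw => ?_
  rw [hregularized]
  exact dotProduct_mulVec_add_smul_one_pos hη hw (hPSD w hPw)
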